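/- For every k ∈ ℕ₀ and every j with 1 ≤ j ≤ n: the polynomial P_k^{(j)} has degree n^k and zero constant coefficient; for every m with 1 ≤ m ≤ n^k, the coefficient of x^m in P_{k+1}^{(j)} equals the coefficient of x^m in P_k^{(1)}; and every coefficient of x^m in P_k^{(j)} for 1 ≤ m ≤ n^k is an n-th root of unity (i.e., lies in {ω^i : 0 ≤ i ≤ n−1}). -/
import Mathlib


open Polynomial

/-- The vector of polynomials `(P_k^{(1)}, …, P_k^{(n)})` defined by
`P_0^{(j)}(x) = x` and `v_{k+1}(x) = A^{(n,k)}(x) v_k(x)`, where `A^{(n,k)}(x)` has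
`(j,l)` entry `ω^{jl} x^{l·n^k}` with `ω = exp(2πi/n)` (indices `0`-based). -/
noncomputable def Fvec (n : ℕ) : ℕ → Fin n → Polynomial ℂ
  | 0 => fun _ => Polynomial.X
  | k + 1 => fun j => ∑ l : Fin n,
      Polynomial.C (Complex.exp (2 * Real.pi * Complex.I / n) ^ ((j : ℕ) * (l : ℕ)))
        * Polynomial.X ^ ((l : ℕ) * n ^ k) * Fvec n k l

private lemma omega_pow_n (n : ℕ) (hn : 2 ≤ n) :
    Complex.exp (2 * Real.pi * Complex.I / n) ^ n = 1 := by
  rw [← Complex.exp_nat_mul, mul_div_cancel₀, Complex.exp_two_pi_mul_I]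
  exact_mod_cast (by omega : n ≠ 0)

private lemma omega_mod (n : ℕ) (hn : 2 ≤ n) (a : ℕ) :
    Complex.exp (2 * Real.pi * Complex.I / n) ^ a =
      Complex.exp (2 * Real.pi * Complex.I / n) ^ (a % n) := by
  conv_lhs => rw [← Nat.mod_add_div a n, pow_add, pow_mul, omega_pow_n n hn, one_pow, mul_one]

private lemma coeff_Fvec_succ (n k : ℕ) (j : Fin n) (m : ℕ) :
    (Fvec n (k + 1) j).coeff m = ∑ l : Fin n,
      Complex.exp (2 * Real.pi * Complex.I / n) ^ ((j : ℕ) * (l : ℕ)) *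
        (if (l : ℕ) * n ^ k ≤ m then (Fvec n k l).coeff (m - (l : ℕ) * n ^ k) else 0) := by
  show (∑ l : Fin n, _ : Polynomial ℂ).coeff m = _
  rw [Polynomial.finset_sum_coeff]
  refine Finset.sum_congr rfl fun l _ => ?_
  rw [mul_right_comm, Polynomial.coeff_mul_X_pow', Polynomial.coeff_C_mul, mul_ite, mul_zero]

private lemma coeff_collapse (n k : ℕ) (hn : 2 ≤ n)
    (hdeg : ∀ l : Fin n, (Fvec n k l).degree = (n ^ k : ℕ))
    (h0 : ∀ l : Fin n, (Fvec n k l).coeff 0 = 0)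
    (j : Fin n) (m : ℕ) (hm1 : 1 ≤ m) (hm2 : m ≤ n ^ (k + 1))
    (l0 : Fin n) (hl0 : (l0 : ℕ) = (m - 1) / n ^ k) :
    (Fvec n (k + 1) j).coeff m =
      Complex.exp (2 * Real.pi * Complex.I / n) ^ ((j : ℕ) * (l0 : ℕ)) *
        (Fvec n k l0).coeff (m - (l0 : ℕ) * n ^ k) := by
  have hnk : 0 < n ^ k := pow_pos (by omega) k
  have hdm : m - 1 = (l0 : ℕ) * n ^ k + (m - 1) % n ^ k := by
    conv_lhs => rw [← Nat.div_add_mod (m - 1) (n ^ k)]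
    rw [hl0, Nat.mul_comm]
  have hmod : (m - 1) % n ^ k < n ^ k := Nat.mod_lt _ hnk
  have hle : (l0 : ℕ) * n ^ k ≤ m - 1 := by
    rw [hl0]; exact Nat.div_mul_le_self _ _
  have hpow : n ^ (k + 1) = n ^ k * n := pow_succ n k
  rw [coeff_Fvec_succ, Finset.sum_eq_single l0]
  · rw [if_pos (by omega)]
  · intro l _ hne
    have hlne : (l : ℕ) ≠ (l0 : ℕ) := fun h => hne (Fin.ext h)
    rcases lt_or_gt_of_ne hlne with hlt | hgt
    · have h1 : ((l : ℕ) + 1) * n ^ k ≤ (l0 : ℕ) * n ^ k :=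
        Nat.mul_le_mul_right _ (by omega)
      have h2 : ((l : ℕ) + 1) * n ^ k = (l : ℕ) * n ^ k + n ^ k := by ring
      have hcz : (Fvec n k l).coeff (m - (l : ℕ) * n ^ k) = 0 := by
        refine Polynomial.coeff_eq_zero_of_degree_lt ?_
        rw [hdeg l]
        exact_mod_cast (by omega : n ^ k < m - (l : ℕ) * n ^ k)
      rw [if_pos (by omega), hcz, mul_zero]
    · have h1 : ((l0 : ℕ) + 1) * n ^ k ≤ (l : ℕ) * n ^ k :=
        Nat.mul_le_mul_right _ (by omega)
      have h2 : ((l0 : ℕ) + 1) * n ^ k = (l0 : ℕ) * n ^ k + n ^ k := by ring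
      split_ifs with h
      · have hz : m - (l : ℕ) * n ^ k = 0 := by omega
        rw [hz, h0 l, mul_zero]
      · rw [mul_zero]
  · intro h; exact absurd (Finset.mem_univ l0) h

private lemma key (n : ℕ) (hn : 2 ≤ n) : ∀ k, ∀ j : Fin n,
    (Fvec n k j).degree = (n ^ k : ℕ) ∧ (Fvec n k j).coeff 0 = 0 ∧
    ∀ m : ℕ, 1 ≤ m → m ≤ n ^ k → ∃ i : ℕ, i < n ∧
      (Fvec n k j).coeff m = Complex.exp (2 * Real.pi * Complex.I / n) ^ i := by
  intro k
  induction k with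
  | zero =>
    intro j
    refine ⟨by simp [Fvec], by simp [Fvec], ?_⟩
    intro m hm1 hm2
    have hm : m = 1 := by simp only [pow_zero] at hm2; omega
    subst hm
    exact ⟨0, by omega, by simp [Fvec]⟩
  | succ k ih =>
    have hdeg := fun l => (ih l).1
    have h0 := fun l => (ih l).2.1
    have hroot := fun l => (ih l).2.2
    have hnk : 0 < n ^ k := pow_pos (by omega) k
    have hpow : n ^ (k + 1) = n ^ k * n := pow_succ n k
    have hpow' : n * n ^ k = n ^ (k + 1) := by ring
    have roots : ∀ j : Fin n, ∀ m : ℕ, 1 ≤ m → m ≤ n ^ (k + 1) → ∃ i : ℕ, i < n ∧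
        (Fvec n (k + 1) j).coeff m = Complex.exp (2 * Real.pi * Complex.I / n) ^ i := by
      intro j m hm1 hm2
      have hlt : (m - 1) / n ^ k < n :=
        (Nat.div_lt_iff_lt_mul hnk).mpr (by omega)
      set l0 : Fin n := ⟨(m - 1) / n ^ k, hlt⟩ with hl0def
      have hcol := coeff_collapse n k hn hdeg h0 j m hm1 hm2 l0 rfl
      have hle : (l0 : ℕ) * n ^ k ≤ m - 1 := Nat.div_mul_le_self _ _
      have hmod : m - 1 < (l0 : ℕ) * n ^ k + n ^ k := by
        have h1 := Nat.div_add_mod (m - 1) (n ^ k)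
        have h2 := Nat.mod_lt (m - 1) hnk
        have h3 : (l0 : ℕ) * n ^ k = n ^ k * ((m - 1) / n ^ k) := by
          show ((m - 1) / n ^ k) * n ^ k = _; ring
        omega
      obtain ⟨i, hi, hco⟩ := hroot l0 (m - (l0 : ℕ) * n ^ k) (by omega) (by omega)
      refine ⟨((j : ℕ) * (l0 : ℕ) + i) % n, Nat.mod_lt _ (by omega), ?_⟩
      rw [hcol, hco, ← pow_add, omega_mod n hn]
    have c0 : ∀ j : Fin n, (Fvec n (k + 1) j).coeff 0 = 0 := by
      intro j
      rw [coeff_Fvec_succ]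
      refine Finset.sum_eq_zero fun l _ => ?_
      split_ifs with h
      · rw [Nat.zero_sub, h0 l, mul_zero]
      · rw [mul_zero]
    have dle : ∀ j : Fin n, (Fvec n (k + 1) j).degree ≤ ((n ^ (k + 1) : ℕ) : WithBot ℕ) := by
      intro j
      rw [Polynomial.degree_le_iff_coeff_zero]
      intro m hm
      have hm' : n ^ (k + 1) < m := by exact_mod_cast hm
      rw [coeff_Fvec_succ]
      refine Finset.sum_eq_zero fun l _ => ?_
      split_ifs with h
      · have hl : (l : ℕ) < n := l.isLt
        have h1 : ((l : ℕ) + 1) * n ^ k ≤ n * n ^ k := Nat.mul_le_mul_right _ (by omega)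
        have h2 : ((l : ℕ) + 1) * n ^ k = (l : ℕ) * n ^ k + n ^ k := by ring
        have hcz : (Fvec n k l).coeff (m - (l : ℕ) * n ^ k) = 0 := by
          refine Polynomial.coeff_eq_zero_of_degree_lt ?_
          rw [hdeg l]
          exact_mod_cast (by omega : n ^ k < m - (l : ℕ) * n ^ k)
        rw [hcz, mul_zero]
      · rw [mul_zero]
    intro j
    obtain ⟨i, hi, hc⟩ := roots j (n ^ (k + 1)) (Nat.one_le_pow _ _ (by omega)) le_rfl
    have hne : (Fvec n (k + 1) j).coeff (n ^ (k + 1)) ≠ 0 := by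
      rw [hc]; exact pow_ne_zero _ (Complex.exp_ne_zero _)
    exact ⟨le_antisymm (dle j) (Polynomial.le_degree_of_ne_zero hne), c0 j, roots j⟩

/-- Each `P_k^{(j)}` has degree `n^k` and zero constant coefficient; for
`1 ≤ m ≤ n^k` the coefficient of `x^m` in `P_{k+1}^{(j)}` equals that in `P_k^{(1)}`;
and each such coefficient of `P_k^{(j)}` is an `n`-th root of unity `ω^i`. -/
theorem stmt17 (n : ℕ) (hn : 2 ≤ n) (k : ℕ) (j : Fin n) :
    (Fvec n k j).degree = (n ^ k : ℕ) ∧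
    (Fvec n k j).coeff 0 = 0 ∧
    (∀ m : ℕ, 1 ≤ m → m ≤ n ^ k →
      (Fvec n (k + 1) j).coeff m = (Fvec n k ⟨0, by omega⟩).coeff m) ∧
    (∀ m : ℕ, 1 ≤ m → m ≤ n ^ k →
      ∃ i : ℕ, i < n ∧
        (Fvec n k j).coeff m = Complex.exp (2 * Real.pi * Complex.I / n) ^ i) := by
  obtain ⟨hd, h0, hr⟩ := key n hn k j
  refine ⟨hd, h0, ?_, hr⟩
  intro m hm1 hm2
  have hnk : 0 < n ^ k := pow_pos (by omega) k
  have hdeg := fun l => (key n hn k l).1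
  have h0' := fun l => (key n hn k l).2.1
  have hpow : n ^ (k + 1) = n ^ k * n := pow_succ n k
  have hmle : m ≤ n ^ (k + 1) := by
    calc m ≤ n ^ k := hm2
    _ ≤ n ^ k * n := Nat.le_mul_of_pos_right _ (by omega)
    _ = n ^ (k + 1) := hpow.symm
  have hz : ((⟨0, by omega⟩ : Fin n) : ℕ) = (m - 1) / n ^ k :=
    (Nat.div_eq_of_lt (by omega)).symm
  rw [coeff_collapse n k hn hdeg h0' j m hm1 hmle ⟨0, by omega⟩ hz]
  simp
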